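/- arXiv:1410.2298 — 2 statements merged into one kernel-verified Lean document; each statement's English description precedes it below -/
import Mathlib

section
/- Let M: W ⇉ W be a closed set-valued map on a metric space with nonempty values, and let V: W → ℝ be continuous and nonincreasing along M (i.e., V(w') ≤ V(w) for all w' ∈ M(w)). Then any bounded trajectory (w_k) with w_{k+1} ∈ M(w_k) has the property that V(w_k) converges and every ω-limit point w of the trajectory satisfies: there exists w' ∈ M(w) with V(w') = V(w). -/
open Filter Topology

/-- A set-valued map is closed if it satisfies the sequential closedness condition. -/
def IsClosedSetValued {W : Type*} [MetricSpace W] (M : W → Set W) : Prop :=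
  ∀ (xs : ℕ → W) (ys : ℕ → W) (x y : W), Tendsto xs atTop (𝓝 x) →
    Tendsto ys atTop (𝓝 y) → (∀ n, ys n ∈ M (xs n)) → y ∈ M x

/-- Discrete-time set-valued LaSalle-type statement: for a closed set-valued map `M`
with nonempty values and a continuous function `V` nonincreasing along `M`, along any
bounded trajectory the values of `V` converge, and every ω-limit point `w` admits
`w' ∈ M(w)` with `V(w') = V(w)`. -/
theorem lasalle_discrete_setValued {W : Type*} [MetricSpace W]
    (M : W → Set W) (hMne : ∀ w, (M w).Nonempty) (hMcl : IsClosedSetValued M)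
    (V : W → ℝ) (hV : Continuous V) (hVdec : ∀ w, ∀ w' ∈ M w, V w' ≤ V w)
    (w : ℕ → W) (hw : ∀ k, w (k + 1) ∈ M (w k))
    (K : Set W) (hK : IsCompact K) (hwK : ∀ k, w k ∈ K) :
    (∃ c : ℝ, Tendsto (fun k => V (w k)) atTop (𝓝 c)) ∧
    (∀ p : W, (∃ φ : ℕ → ℕ, StrictMono φ ∧ Tendsto (w ∘ φ) atTop (𝓝 p)) →
      ∃ p' ∈ M p, V p' = V p) := by
  have hanti : Antitone (fun k => V (w k)) :=
    antitone_nat_of_succ_le fun k => hVdec _ _ (hw k)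
  have hbdd : BddBelow (Set.range fun k => V (w k)) := by
    obtain ⟨b, hb⟩ := (hK.image hV).bddBelow
    exact ⟨b, by rintro x ⟨k, rfl⟩; exact hb ⟨w k, hwK k, rfl⟩⟩
  have hconv : Tendsto (fun k => V (w k)) atTop (𝓝 (⨅ k, V (w k))) :=
    tendsto_atTop_ciInf hanti hbdd
  refine ⟨⟨_, hconv⟩, ?_⟩
  rintro p ⟨φ, hφ, hp⟩
  obtain ⟨p', _, ψ, hψ, hy⟩ := hK.tendsto_subseq (fun k => hwK (φ k + 1))
    (x := fun k => w (φ k + 1))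
  have hxs : Tendsto (fun k => w (φ (ψ k))) atTop (𝓝 p) := hp.comp hψ.tendsto_atTop
  have hmem : p' ∈ M p :=
    hMcl (fun k => w (φ (ψ k))) (fun k => w (φ (ψ k) + 1)) p p' hxs hy (fun k => hw _)
  refine ⟨p', hmem, ?_⟩
  have hidx : Tendsto (fun k => φ (ψ k) + 1) atTop atTop :=
    tendsto_atTop_mono (fun k => Nat.le_succ_of_le ((hφ.comp hψ).id_le k)) tendsto_id
  have h1 : Tendsto (fun k => V (w (φ (ψ k) + 1))) atTop (𝓝 (V p')) :=
    (hV.tendsto p').comp hy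
  have h2 : Tendsto (fun k => V (w (φ (ψ k) + 1))) atTop (𝓝 (⨅ k, V (w k))) :=
    hconv.comp hidx
  have h3 : Tendsto (fun k => V (w (φ (ψ k)))) atTop (𝓝 (V p)) :=
    (hV.tendsto p).comp hxs
  have h4 : Tendsto (fun k => V (w (φ (ψ k)))) atTop (𝓝 (⨅ k, V (w k))) :=
    hconv.comp (hφ.comp hψ).tendsto_atTop
  rw [tendsto_nhds_unique h1 h2, tendsto_nhds_unique h3 h4]
end

section
/- For the discrete-time set-valued dynamical system above, the ω-limit set of a bounded trajectory is nonempty, compact, and weakly positively invariant: for every ω-limit point w there exists w' ∈ M(w) that is also an ω-limit point. -/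
open Filter Topology

/-- The ω-limit set of a bounded trajectory of a closed set-valued map with nonempty
values is nonempty, compact, and weakly positively invariant. -/
theorem omega_limit_weakly_invariant {W : Type*} [MetricSpace W]
    (M : W → Set W) (hMne : ∀ w, (M w).Nonempty) (hMcl : IsClosedSetValued M)
    (w : ℕ → W) (hw : ∀ k, w (k + 1) ∈ M (w k))
    (K : Set W) (hK : IsCompact K) (hwK : ∀ k, w k ∈ K) :
    let Ω : Set W :=
      {p | ∃ φ : ℕ → ℕ, StrictMono φ ∧ Tendsto (w ∘ φ) atTop (𝓝 p)}
    Ω.Nonempty ∧ IsCompact Ω ∧ ∀ p ∈ Ω, ∃ p' ∈ M p, p' ∈ Ω := by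
  intro Ω
  have hΩeq : Ω = {p | MapClusterPt p atTop w} := by
    ext p
    constructor
    · rintro ⟨φ, hφ, hφt⟩
      have h1 : Filter.map (w ∘ φ) atTop ≤ 𝓝 p := hφt
      have h2 : Filter.map (w ∘ φ) atTop ≤ Filter.map w atTop := by
        rw [show w ∘ φ = w ∘ φ from rfl, ← Filter.map_map]
        exact Filter.map_mono (hφ.tendsto_atTop)
      exact Filter.neBot_of_le (f := Filter.map (w ∘ φ) atTop) (le_inf h1 h2)
    · exact fun h => TopologicalSpace.FirstCountableTopology.tendsto_subseq h
  have hΩK : Ω ⊆ K := by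
    rintro p ⟨φ, hφ, hφt⟩
    exact hK.isClosed.mem_of_tendsto hφt (Eventually.of_forall fun n => hwK (φ n))
  have hΩcl : IsClosed Ω := by
    rw [hΩeq]; exact isClosed_setOf_clusterPt
  refine ⟨?_, hK.of_isClosed_subset hΩcl hΩK, ?_⟩
  · obtain ⟨a, _, φ, hφ, hφt⟩ := hK.tendsto_subseq hwK
    exact ⟨a, φ, hφ, hφt⟩
  · rintro p ⟨φ, hφ, hφt⟩
    -- consider the sequence n ↦ w (φ n + 1)
    obtain ⟨p', _, ψ, hψ, hψt⟩ := hK.tendsto_subseq (x := fun n => w (φ n + 1))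
      (fun n => hwK (φ n + 1))
    refine ⟨p', ?_, ?_⟩
    · exact hMcl (fun n => w (φ (ψ n))) (fun n => w (φ (ψ n) + 1)) p p'
        (hφt.comp hψ.tendsto_atTop) hψt (fun n => hw (φ (ψ n)))
    · refine ⟨fun n => φ (ψ n) + 1, ?_, hψt⟩
      intro a b hab
      exact Nat.succ_lt_succ (hφ (hψ hab))
end
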